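/- arXiv:math/0602206 — 2 statements merged into one kernel-verified Lean document; each statement's English description precedes it below -/
import Mathlib

section
/- Every finite-dimensional irreducible representation of U'_q(sp_{2n}) (q nonzero, not a root of unity) is a highest weight representation: it contains a nonzero vector v with s_ij v = 0 for all odd i ∈ {1,3,…,2n−1} and 1 ≤ j ≤ i, and s_{i,i+1} v = λ_i v for some nonzero complex numbers λ_i, and v generates the representation. -/
noncomputable section

/-- Generators `s_ij` (1 ≤ i,j ≤ 2n, 0-indexed here) and the inverses
`s_{2k-1,2k}⁻¹` (paper-odd rows, here `sInv k` for `k : Fin n`) of the twisted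
quantized enveloping algebra `U'_q(sp_{2n})`. -/
inductive SpGen (n : ℕ) where
  | s (i j : Fin (2 * n))
  | sInv (k : Fin n)

/-- The generator `s_ij` inside the free algebra. -/
def Sg (n : ℕ) (i j : Fin (2 * n)) : FreeAlgebra ℂ (SpGen n) := FreeAlgebra.ι ℂ (SpGen.s i j)

/-- The generator `s_{2k-1,2k}⁻¹` inside the free algebra. -/
def SIg (n : ℕ) (k : Fin n) : FreeAlgebra ℂ (SpGen n) := FreeAlgebra.ι ℂ (SpGen.sInv k)

/-- The 0-indexed version of the paper's odd index `2k−1`. -/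
def lo {n : ℕ} (k : Fin n) : Fin (2 * n) := ⟨2 * k.val, by have := k.isLt; omega⟩

/-- The 0-indexed version of the paper's even index `2k`. -/
def hi {n : ℕ} (k : Fin n) : Fin (2 * n) := ⟨2 * k.val + 1, by have := k.isLt; omega⟩

/-- `q^{δ_ab}`: equals `q` if `a = b` and `1` otherwise. -/
def qd (q : ℂ) {m : ℕ} (a b : Fin m) : ℂ := if a = b then q else 1

/-- `δ_{a<b}`: equals `1` if `a < b` and `0` otherwise. -/
def dlt {m : ℕ} (a b : Fin m) : ℂ := if a < b then 1 else 0

/-- `δ_{a<b<c}`: equals `1` if `a < b < c` and `0` otherwise. -/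
def dlt3 {m : ℕ} (a b c : Fin m) : ℂ := if a < b ∧ b < c then 1 else 0

/-- The defining relations of the twisted quantized enveloping algebra
`U'_q(sp_{2n})`: vanishing of `s_ij` above the block diagonal, invertibility
of the `s_{2k-1,2k}`, the component form of the reflection equation
`R S₁ R' S₂ = S₂ R' S₁ R`, and the relations
`s_{i+1,i+1} s_ii − q² s_{i+1,i} s_{i,i+1} = q³` for (paper-)odd `i`. -/
inductive SpRel (q : ℂ) (n : ℕ) :
    FreeAlgebra ℂ (SpGen n) → FreeAlgebra ℂ (SpGen n) → Prop where
  | s_zero (i j : Fin (2 * n))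
      (h : (j.val = i.val + 1 ∧ i.val % 2 = 1) ∨ i.val + 2 ≤ j.val) :
      SpRel q n (Sg n i j) 0
  | inv_right (k : Fin n) : SpRel q n (Sg n (lo k) (hi k) * SIg n k) 1
  | inv_left (k : Fin n) : SpRel q n (SIg n k * Sg n (lo k) (hi k)) 1
  | reflection (i j a b : Fin (2 * n)) :
      SpRel q n
        ((qd q a j * qd q i j) • (Sg n i a * Sg n j b)
          - (qd q a b * qd q i b) • (Sg n j b * Sg n i a))
        (((q - q⁻¹) * qd q a i * (dlt b a - dlt i j)) • (Sg n j a * Sg n i b)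
          + (q - q⁻¹) • ((qd q a b * dlt b i) • (Sg n j i * Sg n b a)
              - (qd q i j * dlt a j) • (Sg n i j * Sg n a b))
          + ((q - q⁻¹) ^ 2 * (dlt3 b a i - dlt3 a i j)) • (Sg n j i * Sg n a b))
  | qdet (k : Fin n) :
      SpRel q n
        (Sg n (hi k) (hi k) * Sg n (lo k) (lo k)
          - (q ^ 2) • (Sg n (hi k) (lo k) * Sg n (lo k) (hi k)))
        ((q ^ 3 : ℂ) • (1 : FreeAlgebra ℂ (SpGen n)))

/-- The twisted quantized enveloping algebra `U'_q(sp_{2n})`. -/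
abbrev Usp (q : ℂ) (n : ℕ) := RingQuot (SpRel q n)

/-- The generator `s_ij` of `U'_q(sp_{2n})`. -/
def S (q : ℂ) (n : ℕ) (i j : Fin (2 * n)) : Usp q n :=
  RingQuot.mkAlgHom ℂ (SpRel q n) (Sg n i j)

/-- The generator `s_{2k-1,2k}⁻¹` of `U'_q(sp_{2n})`. -/
def SInv (q : ℂ) (n : ℕ) (k : Fin n) : Usp q n :=
  RingQuot.mkAlgHom ℂ (SpRel q n) (SIg n k)

/-!
The elements `A_k = s_{lo k, hi k}` commute pairwise and are invertible, so a finite-dimensional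
representation has nonzero joint eigenspaces (weight spaces) for them, with nonzero weights. The
reflection equation gives `A_k s_{lo k, j} = q^t s_{lo k, j} A_k` with `t ∈ {1, 2}` for `j ≤ lo k`,
and `A_m` commutes with `s_{lo k, j}` for `m > k`. So `s_{lo k, j}` moves a weight vector of weight
`χ` into a space on which the `A_m`, `m ≥ k`, act by a weight that agrees with `χ` above `k` and is
multiplied by `q^t` at `k`. Since `q` is not a root of unity this raising relation is a strict
order, and a weight that is maximal among the finitely many weights yields a vector killed by
every `s_{lo k, j}`. Simplicity makes that vector a generator.
-/

section Relations

variable {q : ℂ} {n : ℕ}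

lemma S_eq_zero {i j : Fin (2 * n)}
    (h : (j.val = i.val + 1 ∧ i.val % 2 = 1) ∨ i.val + 2 ≤ j.val) : S q n i j = 0 := by
  simpa [S] using RingQuot.mkAlgHom_rel ℂ (SpRel.s_zero (q := q) i j h)

lemma S_reflection (i j a b : Fin (2 * n)) :
    (qd q a j * qd q i j) • (S q n i a * S q n j b)
      - (qd q a b * qd q i b) • (S q n j b * S q n i a)
    = ((q - q⁻¹) * qd q a i * (dlt b a - dlt i j)) • (S q n j a * S q n i b)
      + (q - q⁻¹) • ((qd q a b * dlt b i) • (S q n j i * S q n b a)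
          - (qd q i j * dlt a j) • (S q n i j * S q n a b))
      + ((q - q⁻¹) ^ 2 * (dlt3 b a i - dlt3 a i j)) • (S q n j i * S q n a b) := by
  simpa only [S, map_sub, map_add, map_smul, map_mul] using
    RingQuot.mkAlgHom_rel ℂ (SpRel.reflection (q := q) (n := n) i j a b)

lemma SInv_mul_S_lo_hi (k : Fin n) : SInv q n k * S q n (lo k) (hi k) = 1 := by
  simpa only [S, SInv, map_mul, map_one] using
    RingQuot.mkAlgHom_rel ℂ (SpRel.inv_left (q := q) (n := n) k)

lemma commute_S_lo_hi_of_lt {k m : Fin n} (hkm : k < m) {b : Fin (2 * n)} (hb : b ≤ hi k) :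
    Commute (S q n (lo m) (hi m)) (S q n (lo k) b) := by
  have h := S_reflection (q := q) (lo m) (lo k) (hi m) b
  have hkm : k.val < m.val := hkm
  have hb : b.val ≤ 2 * k.val + 1 := hb
  rw [S_eq_zero (i := lo k) (j := hi m) (Or.inr (by simp only [lo, hi]; omega)),
    S_eq_zero (i := lo k) (j := lo m) (Or.inr (by simp only [lo]; omega))] at h
  simp only [qd, dlt, dlt3, Fin.ext_iff, Fin.lt_def, lo, hi] at h
  simp (disch := omega) only [if_neg, zero_mul, mul_zero, smul_zero, zero_smul, add_zero,
    sub_zero, sub_self, one_mul, one_smul] at h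
  exact sub_eq_zero.mp h

lemma S_lo_hi_mul_S_lo_of_le (hq : q ≠ 0) {k : Fin n} {j : Fin (2 * n)} (hj : j ≤ lo k) :
    S q n (lo k) (hi k) * S q n (lo k) j
      = (q * qd q (lo k) j) • (S q n (lo k) j * S q n (lo k) (hi k)) := by
  have h := S_reflection (q := q) (lo k) (lo k) (hi k) j
  have hj : j.val ≤ 2 * k.val := hj
  have hvanish : dlt j (lo k) • (S q n (lo k) (lo k) * S q n j (hi k)) = 0 := by
    rcases hj.lt_or_eq with hlt | heq
    · rw [S_eq_zero (i := j) (j := hi k) (Or.inr (by simp only [hi]; omega)), mul_zero, smul_zero]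
    · simp [dlt, Fin.lt_def, lo, heq]
  have hdlt : dlt j (hi k) = 1 := if_pos (by simp only [Fin.lt_def, hi]; omega)
  have hS : dlt3 j (hi k) (lo k) = 0 := if_neg (by simp only [Fin.lt_def, hi, lo]; omega)
  have hS' : dlt3 (hi k) (lo k) (lo k) = 0 := if_neg (by simp only [Fin.lt_def, hi, lo]; omega)
  have hd : dlt (hi k) (lo k) = 0 := if_neg (by simp only [Fin.lt_def, hi, lo]; omega)
  have hd' : dlt (lo k) (lo k) = 0 := if_neg (lt_irrefl _)
  have hq1 : qd q (hi k) (lo k) = 1 := if_neg (by simp only [Fin.ext_iff, hi, lo]; omega)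
  have hq2 : qd q (hi k) j = 1 := if_neg (by simp only [Fin.ext_iff, hi]; omega)
  have hq3 : qd q (lo k) (lo k) = q := if_pos rfl
  simp only [hq1, hq2, hq3, hdlt, hS, hS', hd, hd', one_mul, mul_one, hvanish, sub_zero,
    zero_smul, smul_zero, add_zero, mul_zero] at h
  have key : qd q (lo k) j • (S q n (lo k) j * S q n (lo k) (hi k))
      = q⁻¹ • (S q n (lo k) (hi k) * S q n (lo k) j) := by
    linear_combination (norm := module) -h
  rw [mul_smul, key, smul_smul, mul_inv_cancel₀ hq, one_smul]

lemma commute_S_lo_hi (k m : Fin n) :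
    Commute (S q n (lo k) (hi k)) (S q n (lo m) (hi m)) := by
  rcases lt_trichotomy k m with h | rfl | h
  · exact (commute_S_lo_hi_of_lt h le_rfl).symm
  · exact Commute.refl _
  · exact commute_S_lo_hi_of_lt h le_rfl

end Relations

lemma exists_pow_eq_mul_qd (q : ℂ) {m : ℕ} (a b : Fin m) :
    ∃ t : ℕ, 0 < t ∧ q * qd q a b = q ^ t := by
  by_cases h : a = b
  · exact ⟨2, two_pos, by simp [qd, h, sq]⟩
  · exact ⟨1, one_pos, by simp [qd, h]⟩

namespace Module.End

variable {K V ι : Type*} [Field K] [AddCommGroup V] [Module K V]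

lemma _root_.Commute.apply_mem_eigenspace {f g : End K V} (h : Commute f g) {μ : K} {v : V}
    (hv : v ∈ eigenspace f μ) : g v ∈ eigenspace f μ := by
  rw [mem_eigenspace_iff] at hv ⊢
  rw [← mul_apply, h.eq, mul_apply, hv, map_smul]

theorem exists_common_eigenvector [IsAlgClosed K] [FiniteDimensional K V] {f : ι → End K V}
    (hf : ∀ i j, Commute (f i) (f j)) {W : Submodule K V} (hW : W ≠ ⊥)
    (hWf : ∀ i, ∀ v ∈ W, f i v ∈ W) :
    ∃ χ : ι → K, ∃ v ∈ W, v ≠ 0 ∧ ∀ i, f i v = χ i • v := by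
  obtain ⟨U, ⟨hU, hUW, hUf⟩, hmin⟩ := wellFounded_lt.has_min
    {U : Submodule K V | U ≠ ⊥ ∧ U ≤ W ∧ ∀ i, ∀ v ∈ U, f i v ∈ U} ⟨W, hW, le_rfl, hWf⟩
  -- a minimal nonzero invariant subspace lies in an eigenspace of every `f i`
  have scalar (i : ι) : ∃ μ : K, ∀ v ∈ U, f i v = μ • v := by
    have : Nontrivial U := Submodule.nontrivial_iff_ne_bot.mpr hU
    obtain ⟨μ, hμ⟩ := exists_eigenvalue ((f i).restrict (hUf i))
    obtain ⟨⟨v, hvU⟩, hv, hv0⟩ := hμ.exists_hasEigenvector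
    have hinv (j : ι) (w : V) (hw : w ∈ eigenspace (f i) μ ⊓ U) :
        f j w ∈ eigenspace (f i) μ ⊓ U :=
      Submodule.mem_inf.mpr ⟨(hf i j).apply_mem_eigenspace (Submodule.mem_inf.mp hw).1,
        hUf j w (Submodule.mem_inf.mp hw).2⟩
    have hne : eigenspace (f i) μ ⊓ U ≠ ⊥ := by
      refine (Submodule.ne_bot_iff _).mpr ⟨v, Submodule.mem_inf.mpr ⟨?_, hvU⟩, ?_⟩
      · rw [mem_eigenspace_iff]
        simpa using congrArg Subtype.val (mem_eigenspace_iff.mp hv)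
      · simpa using hv0
    have heq : eigenspace (f i) μ ⊓ U = U := by
      by_contra h
      exact hmin _ ⟨hne, inf_le_right.trans hUW, hinv⟩ (inf_le_right.lt_of_ne h)
    exact ⟨μ, fun w hw => mem_eigenspace_iff.mp (Submodule.mem_inf.mp (heq ▸ hw)).1⟩
  choose χ hχ using scalar
  obtain ⟨v, hvU, hv0⟩ := (Submodule.ne_bot_iff U).mp hU
  exact ⟨χ, v, hUW hvU, hv0, fun i => hχ i v hvU⟩

end Module.End

section WeightOrder

variable {K ι : Type*} [Field K] [LinearOrder ι]

-- The clause `χ k ≠ 0` is what makes this relation irreflexive.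
def WeightLT (q : K) (χ ψ : ι → K) : Prop :=
  ∃ k, (∀ m, k < m → χ m = ψ m) ∧ χ k ≠ 0 ∧ ∃ t : ℕ, 0 < t ∧ ψ k = q ^ t * χ k

theorem weightLT_isStrictOrder {q : K} (hroot : ∀ m : ℕ, 0 < m → q ^ m ≠ 1) :
    IsStrictOrder (ι → K) (WeightLT q) where
  irrefl χ := by
    rintro ⟨k, -, hk, t, ht, h⟩
    exact hroot t ht (mul_eq_right₀ hk |>.mp h.symm)
  trans χ ψ φ := by
    rintro ⟨k, hk, hk0, t, ht, h⟩ ⟨l, hl, hl0, s, hs, h'⟩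
    rcases lt_trichotomy k l with hkl | rfl | hlk
    · refine ⟨l, fun m hm => (hk m (hkl.trans hm)).trans (hl m hm), ?_, s, hs, ?_⟩
      · rwa [hk l hkl]
      · rw [h', hk l hkl]
    · refine ⟨k, fun m hm => (hk m hm).trans (hl m hm), hk0, t + s, by omega, ?_⟩
      rw [h', h, pow_add]; ring
    · refine ⟨k, fun m hm => (hk m hm).trans (hl m (hlk.trans hm)), hk0, t, ht, ?_⟩
      rw [← hl k hlk, h]

theorem Set.Finite.exists_weightLT_maximal {q : K} (hroot : ∀ m : ℕ, 0 < m → q ^ m ≠ 1)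
    {s : Set (ι → K)} (hs : s.Finite) (hne : s.Nonempty) :
    ∃ χ ∈ s, ∀ ψ ∈ s, ¬ WeightLT q χ ψ := by
  have := weightLT_isStrictOrder (ι := ι) hroot
  obtain ⟨⟨χ, hχ⟩, -, hmax⟩ :=
    (hs.wellFoundedOn (r := Function.swap (WeightLT q))).has_min Set.univ
      ⟨⟨_, hne.some_mem⟩, trivial⟩
  exact ⟨χ, hχ, fun ψ hψ => hmax ⟨ψ, hψ⟩ trivial⟩

end WeightOrder

namespace Usp

open Module.End

variable {q : ℂ} {n : ℕ} {V : Type*} [AddCommGroup V] [Module ℂ V]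
  (ρ : Usp q n →ₐ[ℂ] Module.End ℂ V)

def weightSpace (χ : Fin n → ℂ) : Submodule ℂ V :=
  ⨅ k, eigenspace (ρ (S q n (lo k) (hi k))) (χ k)

variable {ρ}

lemma mem_weightSpace {χ : Fin n → ℂ} {v : V} :
    v ∈ weightSpace ρ χ ↔ ∀ k, ρ (S q n (lo k) (hi k)) v = χ k • v := by
  simp only [weightSpace, Submodule.mem_iInf, mem_eigenspace_iff]

lemma eigenvalue_ne_zero {k : Fin n} {μ : ℂ} {v : V} (hv : v ≠ 0)
    (h : ρ (S q n (lo k) (hi k)) v = μ • v) : μ ≠ 0 := by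
  rintro rfl
  apply hv
  calc v = ρ (SInv q n k * S q n (lo k) (hi k)) v := by
        rw [SInv_mul_S_lo_hi, map_one, one_apply]
    _ = 0 := by rw [map_mul, mul_apply, h, zero_smul, map_zero]

variable (ρ) in
lemma finite_setOf_weightSpace_ne_bot [FiniteDimensional ℂ V] :
    {χ : Fin n → ℂ | weightSpace ρ χ ≠ ⊥}.Finite := by
  refine (Set.Finite.pi' fun k => (ρ (S q n (lo k) (hi k))).finite_hasEigenvalue).subset ?_
  intro χ hχ k
  obtain ⟨v, hv, hv0⟩ := (Submodule.ne_bot_iff _).mp hχ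
  exact hasEigenvalue_of_hasEigenvector ⟨mem_eigenspace_iff.mpr (mem_weightSpace.mp hv k), hv0⟩

lemma exists_weightSpace_ne_bot [FiniteDimensional ℂ V] {k : Fin n} {χ : Fin n → ℂ} {c : ℂ}
    {w : V} (hw : w ≠ 0) (hk : ρ (S q n (lo k) (hi k)) w = c • w)
    (hm : ∀ m, k < m → ρ (S q n (lo m) (hi m)) w = χ m • w) :
    ∃ ψ, weightSpace ρ ψ ≠ ⊥ ∧ ψ k = c ∧ ∀ m, k < m → ψ m = χ m := by
  set U := eigenspace (ρ (S q n (lo k) (hi k))) c ⊓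
    ⨅ m, ⨅ (_ : k < m), eigenspace (ρ (S q n (lo m) (hi m))) (χ m)
  have hcomm (i j : Fin n) : Commute (ρ (S q n (lo i) (hi i))) (ρ (S q n (lo j) (hi j))) :=
    (commute_S_lo_hi i j).map ρ
  have hU : ∀ i, ∀ u ∈ U, ρ (S q n (lo i) (hi i)) u ∈ U := by
    simp only [U, Submodule.mem_inf, Submodule.mem_iInf]
    exact fun i u ⟨hu, hu'⟩ => ⟨(hcomm k i).apply_mem_eigenspace hu,
      fun m hm => (hcomm m i).apply_mem_eigenspace (hu' m hm)⟩
  have hwU : w ∈ U := by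
    simp only [U, Submodule.mem_inf, Submodule.mem_iInf, mem_eigenspace_iff]
    exact ⟨hk, hm⟩
  obtain ⟨ψ, u, huU, hu0, hψ⟩ :=
    exists_common_eigenvector hcomm ((Submodule.ne_bot_iff U).mpr ⟨w, hwU, hw⟩) hU
  simp only [U, Submodule.mem_inf, Submodule.mem_iInf, mem_eigenspace_iff] at huU
  refine ⟨ψ, (Submodule.ne_bot_iff _).mpr ⟨u, mem_weightSpace.mpr hψ, hu0⟩, ?_, fun m hm => ?_⟩
  · exact smul_left_injective ℂ hu0 ((hψ k).symm.trans huU.1)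
  · exact smul_left_injective ℂ hu0 ((hψ m).symm.trans (huU.2 m hm))

lemma S_lo_hi_apply_S_lo_apply (hq : q ≠ 0) {χ : Fin n → ℂ} {v : V} (hv : v ∈ weightSpace ρ χ)
    {k : Fin n} {j : Fin (2 * n)} (hj : j ≤ lo k) :
    ρ (S q n (lo k) (hi k)) (ρ (S q n (lo k) j) v)
      = (q * qd q (lo k) j * χ k) • ρ (S q n (lo k) j) v := by
  rw [← mul_apply, ← map_mul, S_lo_hi_mul_S_lo_of_le hq hj, map_smul, map_mul, LinearMap.smul_apply,
    mul_apply, mem_weightSpace.mp hv k, map_smul, smul_smul]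

lemma S_lo_hi_apply_S_lo_apply_of_lt {χ : Fin n → ℂ} {v : V} (hv : v ∈ weightSpace ρ χ)
    {k m : Fin n} (hkm : k < m) {j : Fin (2 * n)} (hj : j ≤ lo k) :
    ρ (S q n (lo m) (hi m)) (ρ (S q n (lo k) j) v) = χ m • ρ (S q n (lo k) j) v := by
  have hcomm := (commute_S_lo_hi_of_lt hkm (hj.trans (Fin.le_def.mpr (by simp [lo, hi])))).map ρ
  rw [← mul_apply, hcomm.eq, mul_apply, mem_weightSpace.mp hv m, map_smul]

variable (ρ) in
theorem exists_highestWeightVector [FiniteDimensional ℂ V] [Nontrivial V] (hq : q ≠ 0)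
    (hroot : ∀ m : ℕ, 0 < m → q ^ m ≠ 1) :
    ∃ χ : Fin n → ℂ, ∃ v ∈ weightSpace ρ χ, v ≠ 0 ∧
      ∀ (k : Fin n) (j : Fin (2 * n)), j ≤ lo k → ρ (S q n (lo k) j) v = 0 := by
  have hne : {χ : Fin n → ℂ | weightSpace ρ χ ≠ ⊥}.Nonempty := by
    obtain ⟨χ, v, -, hv0, hv⟩ := exists_common_eigenvector (fun i j => (commute_S_lo_hi i j).map ρ)
      (bot_ne_top (α := Submodule ℂ V)).symm fun _ _ _ => Submodule.mem_top
    exact ⟨χ, (Submodule.ne_bot_iff _).mpr ⟨v, mem_weightSpace.mpr hv, hv0⟩⟩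
  obtain ⟨χ, hχ, hmax⟩ := (finite_setOf_weightSpace_ne_bot ρ).exists_weightLT_maximal hroot hne
  obtain ⟨v, hv, hv0⟩ := (Submodule.ne_bot_iff _).mp hχ
  refine ⟨χ, v, hv, hv0, fun k j hj => ?_⟩
  by_contra hw
  obtain ⟨ψ, hψ, hψk, hψm⟩ := exists_weightSpace_ne_bot hw (S_lo_hi_apply_S_lo_apply hq hv hj)
    fun m hm => S_lo_hi_apply_S_lo_apply_of_lt hv hm hj
  obtain ⟨t, ht, hqt⟩ := exists_pow_eq_mul_qd q (lo k) j
  exact hmax ψ hψ ⟨k, fun m hm => (hψm m hm).symm,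
    eigenvalue_ne_zero hv0 (mem_weightSpace.mp hv k), t, ht, by rw [hψk, hqt]⟩

end Usp

/-- Every finite-dimensional irreducible representation of `U'_q(sp_{2n})`
(`q` nonzero, not a root of unity) is a highest weight representation: it
contains a nonzero vector `v` with `s_ij v = 0` for all paper-odd `i` and
`j ≤ i`, and `s_{i,i+1} v = λ_i v` for some nonzero scalars `λ_i`, and `v`
generates the representation. -/
theorem fd_simple_is_highest_weight (q : ℂ) (hq : q ≠ 0)
    (hroot : ∀ m : ℕ, 0 < m → q ^ m ≠ 1) (n : ℕ)
    (L : Type) [AddCommGroup L] [Module ℂ L] [Module (Usp q n) L]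
    [IsScalarTower ℂ (Usp q n) L]
    (hsimple : IsSimpleModule (Usp q n) L) (hfd : FiniteDimensional ℂ L) :
    ∃ v : L, v ≠ 0 ∧
      (∀ (k : Fin n) (j : Fin (2 * n)), j ≤ lo k → S q n (lo k) j • v = 0) ∧
      (∀ k : Fin n, ∃ lam : ℂ, lam ≠ 0 ∧ S q n (lo k) (hi k) • v = lam • v) ∧
      Submodule.span (Usp q n) {v} = ⊤ := by
  have : Nontrivial L := IsSimpleModule.nontrivial (Usp q n) L
  obtain ⟨χ, v, hv, hv0, hvanish⟩ := Usp.exists_highestWeightVector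
    (Algebra.lsmul ℂ ℂ L : Usp q n →ₐ[ℂ] Module.End ℂ L) hq hroot
  have hcartan := Usp.mem_weightSpace.mp hv
  exact ⟨v, hv0, hvanish, fun k => ⟨χ k, Usp.eigenvalue_ne_zero hv0 (hcartan k), hcartan k⟩,
    IsSimpleModule.span_singleton_eq_top _ hv0⟩

end
end

section
/- Let V be a module over U'_q(sp₄) and let L⁰ = {v ∈ V : s₁₁ v = s₃₁ v = s₃₃ v = 0}. Then L⁰ is stable under each of the operators s₃₂, s₄₁, s₁₂, s₃₄, s₁₂^{-1}, s₃₄^{-1}, and on L⁰ the commutator relation s₃₂ s₄₁ − s₄₁ s₃₂ = (q²−1)(s₁₂^{-1} s₃₄ − s₁₂ s₃₄^{-1}) holds. -/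
noncomputable section

/-- Indices of `Fin 4 = Fin (2*2)` for `U'_q(sp₄)`. -/
def i0 : Fin (2 * 2) := ⟨0, by norm_num⟩
def i1 : Fin (2 * 2) := ⟨1, by norm_num⟩
def i2 : Fin (2 * 2) := ⟨2, by norm_num⟩
def i3 : Fin (2 * 2) := ⟨3, by norm_num⟩
def k0 : Fin 2 := ⟨0, by norm_num⟩
def k1 : Fin 2 := ⟨1, by norm_num⟩

variable (q : ℂ)

/-- The subspace `L⁰ = {v : s₁₁ v = s₃₁ v = s₃₃ v = 0}` of a
`U'_q(sp₄)`-module `V`. -/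
def Lzero (V : Type) [AddCommGroup V] [Module (Usp q 2) V] : Set V :=
  {v | S q 2 i0 i0 • v = 0 ∧ S q 2 i2 i0 • v = 0 ∧ S q 2 i2 i2 • v = 0}

lemma S_def (n : ℕ) (i j : Fin (2*n)) :
    RingQuot.mkAlgHom ℂ (SpRel q n) (Sg n i j) = S q n i j := rfl
lemma rel_eq {n : ℕ} {a b : FreeAlgebra ℂ (SpGen n)} (h : SpRel q n a b) :
    RingQuot.mkAlgHom ℂ (SpRel q n) a = RingQuot.mkAlgHom ℂ (SpRel q n) b :=
  RingQuot.mkAlgHom_rel ℂ h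
lemma Z02 : S q 2 i0 i2 = 0 := by
  simpa [S_def] using rel_eq q (SpRel.s_zero (q := q) i0 i2 (by decide))
lemma Z03 : S q 2 i0 i3 = 0 := by
  simpa [S_def] using rel_eq q (SpRel.s_zero (q := q) i0 i3 (by decide))
lemma Z12 : S q 2 i1 i2 = 0 := by
  simpa [S_def] using rel_eq q (SpRel.s_zero (q := q) i1 i2 (by decide))
lemma Z13 : S q 2 i1 i3 = 0 := by
  simpa [S_def] using rel_eq q (SpRel.s_zero (q := q) i1 i3 (by decide))

lemma L1 (hq : q ≠ 0) :
    S q 2 i0 i0 * S q 2 i2 i1 = S q 2 i2 i1 * S q 2 i0 i0 - (q^2 - 1) • (S q 2 i2 i0 * S q 2 i0 i1) := by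
  have h := rel_eq q (SpRel.reflection (q := q) i0 i2 i0 i1)
  simp only [map_sub, map_add, map_smul, map_mul, S_def] at h
  simp (config := { decide := true }) only [qd, dlt, dlt3, if_true, if_false, Z02, Z03, Z12, Z13, mul_zero,
    zero_mul, smul_zero, add_zero, zero_add, sub_zero, zero_sub, neg_zero] at h
  linear_combination (norm := match_scalars <;> (field_simp; try ring1)) h

lemma L2 (hq : q ≠ 0) :
    q • (S q 2 i2 i0 * S q 2 i0 i1) = S q 2 i0 i1 * S q 2 i2 i0 := by
  have h := rel_eq q (SpRel.reflection (q := q) i2 i0 i0 i1)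
  simp only [map_sub, map_add, map_smul, map_mul, S_def] at h
  simp (config := { decide := true }) only [qd, dlt, dlt3, if_true, if_false, Z02, Z03, Z12, Z13, mul_zero,
    zero_mul, smul_zero, add_zero, zero_add, sub_zero, zero_sub, neg_zero] at h
  linear_combination (norm := match_scalars <;> (field_simp; try ring1)) h

lemma L3 (hq : q ≠ 0) :
    S q 2 i0 i0 * S q 2 i3 i0 = S q 2 i3 i0 * S q 2 i0 i0 := by
  have h := rel_eq q (SpRel.reflection (q := q) i0 i3 i0 i0)
  simp only [map_sub, map_add, map_smul, map_mul, S_def] at h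
  simp (config := { decide := true }) only [qd, dlt, dlt3, if_true, if_false, Z02, Z03, Z12, Z13, mul_zero,
    zero_mul, smul_zero, add_zero, zero_add, sub_zero, zero_sub, neg_zero] at h
  linear_combination (norm := match_scalars <;> (field_simp; try ring1)) h

lemma L4 (hq : q ≠ 0) :
    (q^2) • (S q 2 i0 i0 * S q 2 i0 i1) = S q 2 i0 i1 * S q 2 i0 i0 := by
  have h := rel_eq q (SpRel.reflection (q := q) i0 i0 i0 i1)
  simp only [map_sub, map_add, map_smul, map_mul, S_def] at h
  simp (config := { decide := true }) only [qd, dlt, dlt3, if_true, if_false, Z02, Z03, Z12, Z13, mul_zero,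
    zero_mul, smul_zero, add_zero, zero_add, sub_zero, zero_sub, neg_zero] at h
  linear_combination (norm := match_scalars <;> (field_simp; try ring1)) h

lemma L5 (hq : q ≠ 0) :
    S q 2 i0 i0 * S q 2 i2 i3 = S q 2 i2 i3 * S q 2 i0 i0 := by
  have h := rel_eq q (SpRel.reflection (q := q) i0 i2 i0 i3)
  simp only [map_sub, map_add, map_smul, map_mul, S_def] at h
  simp (config := { decide := true }) only [qd, dlt, dlt3, if_true, if_false, Z02, Z03, Z12, Z13, mul_zero,
    zero_mul, smul_zero, add_zero, zero_add, sub_zero, zero_sub, neg_zero] at h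
  linear_combination (norm := match_scalars <;> (field_simp; try ring1)) h

lemma L6 (hq : q ≠ 0) :
    q • (S q 2 i2 i0 * S q 2 i2 i1) = S q 2 i2 i1 * S q 2 i2 i0 - (q^2 - 1) • (S q 2 i2 i2 * S q 2 i0 i1) + (q - q⁻¹) • (S q 2 i2 i2 * S q 2 i1 i0) := by
  have h := rel_eq q (SpRel.reflection (q := q) i2 i2 i0 i1)
  simp only [map_sub, map_add, map_smul, map_mul, S_def] at h
  simp (config := { decide := true }) only [qd, dlt, dlt3, if_true, if_false, Z02, Z03, Z12, Z13, mul_zero,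
    zero_mul, smul_zero, add_zero, zero_add, sub_zero, zero_sub, neg_zero] at h
  linear_combination (norm := match_scalars <;> (field_simp; try ring1)) h

lemma L7 (hq : q ≠ 0) :
    q • (S q 2 i2 i0 * S q 2 i3 i0) = S q 2 i3 i0 * S q 2 i2 i0 - (q^2 - 1) • (S q 2 i2 i3 * S q 2 i0 i0) + (q - q⁻¹) • (S q 2 i3 i2 * S q 2 i0 i0) := by
  have h := rel_eq q (SpRel.reflection (q := q) i2 i3 i0 i0)
  simp only [map_sub, map_add, map_smul, map_mul, S_def] at h
  simp (config := { decide := true }) only [qd, dlt, dlt3, if_true, if_false, Z02, Z03, Z12, Z13, mul_zero,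
    zero_mul, smul_zero, add_zero, zero_add, sub_zero, zero_sub, neg_zero] at h
  linear_combination (norm := match_scalars <;> (field_simp; try ring1)) q • h

lemma L8 (hq : q ≠ 0) :
    q • (S q 2 i2 i0 * S q 2 i2 i3) = S q 2 i2 i3 * S q 2 i2 i0 := by
  have h := rel_eq q (SpRel.reflection (q := q) i2 i2 i0 i3)
  simp only [map_sub, map_add, map_smul, map_mul, S_def] at h
  simp (config := { decide := true }) only [qd, dlt, dlt3, if_true, if_false, Z02, Z03, Z12, Z13, mul_zero,
    zero_mul, smul_zero, add_zero, zero_add, sub_zero, zero_sub, neg_zero] at h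
  linear_combination (norm := match_scalars <;> (field_simp; try ring1)) h

lemma L9 (hq : q ≠ 0) :
    S q 2 i2 i2 * S q 2 i2 i1 = S q 2 i2 i1 * S q 2 i2 i2 := by
  have h := rel_eq q (SpRel.reflection (q := q) i2 i2 i2 i1)
  simp only [map_sub, map_add, map_smul, map_mul, S_def] at h
  simp (config := { decide := true }) only [qd, dlt, dlt3, if_true, if_false, Z02, Z03, Z12, Z13, mul_zero,
    zero_mul, smul_zero, add_zero, zero_add, sub_zero, zero_sub, neg_zero] at h
  linear_combination (norm := match_scalars <;> (field_simp; try ring1)) h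

lemma L10 (hq : q ≠ 0) :
    S q 2 i2 i2 * S q 2 i3 i0 = S q 2 i3 i0 * S q 2 i2 i2 - (q - q⁻¹) • (S q 2 i2 i3 * S q 2 i2 i0) := by
  have h := rel_eq q (SpRel.reflection (q := q) i2 i3 i2 i0)
  simp only [map_sub, map_add, map_smul, map_mul, S_def] at h
  simp (config := { decide := true }) only [qd, dlt, dlt3, if_true, if_false, Z02, Z03, Z12, Z13, mul_zero,
    zero_mul, smul_zero, add_zero, zero_add, sub_zero, zero_sub, neg_zero] at h
  linear_combination (norm := match_scalars <;> (field_simp; try ring1)) h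

lemma L11 (hq : q ≠ 0) :
    S q 2 i2 i2 * S q 2 i0 i1 = S q 2 i0 i1 * S q 2 i2 i2 := by
  have h := rel_eq q (SpRel.reflection (q := q) i2 i0 i2 i1)
  simp only [map_sub, map_add, map_smul, map_mul, S_def] at h
  simp (config := { decide := true }) only [qd, dlt, dlt3, if_true, if_false, Z02, Z03, Z12, Z13, mul_zero,
    zero_mul, smul_zero, add_zero, zero_add, sub_zero, zero_sub, neg_zero] at h
  linear_combination (norm := match_scalars <;> (field_simp; try ring1)) h

lemma L12 (hq : q ≠ 0) :
    (q^2) • (S q 2 i2 i2 * S q 2 i2 i3) = S q 2 i2 i3 * S q 2 i2 i2 := by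
  have h := rel_eq q (SpRel.reflection (q := q) i2 i2 i2 i3)
  simp only [map_sub, map_add, map_smul, map_mul, S_def] at h
  simp (config := { decide := true }) only [qd, dlt, dlt3, if_true, if_false, Z02, Z03, Z12, Z13, mul_zero,
    zero_mul, smul_zero, add_zero, zero_add, sub_zero, zero_sub, neg_zero] at h
  linear_combination (norm := match_scalars <;> (field_simp; try ring1)) h

lemma L13 (hq : q ≠ 0) :
    S q 2 i2 i2 * S q 2 i1 i0 = S q 2 i1 i0 * S q 2 i2 i2 := by
  have h := rel_eq q (SpRel.reflection (q := q) i2 i1 i2 i0)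
  simp only [map_sub, map_add, map_smul, map_mul, S_def] at h
  simp (config := { decide := true }) only [qd, dlt, dlt3, if_true, if_false, Z02, Z03, Z12, Z13, mul_zero,
    zero_mul, smul_zero, add_zero, zero_add, sub_zero, zero_sub, neg_zero] at h
  linear_combination (norm := match_scalars <;> (field_simp; try ring1)) h

lemma L14 (hq : q ≠ 0) :
    S q 2 i3 i2 * S q 2 i0 i1 = S q 2 i0 i1 * S q 2 i3 i2 := by
  have h := rel_eq q (SpRel.reflection (q := q) i3 i0 i2 i1)
  simp only [map_sub, map_add, map_smul, map_mul, S_def] at h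
  simp (config := { decide := true }) only [qd, dlt, dlt3, if_true, if_false, Z02, Z03, Z12, Z13, mul_zero,
    zero_mul, smul_zero, add_zero, zero_add, sub_zero, zero_sub, neg_zero] at h
  linear_combination (norm := match_scalars <;> (field_simp; try ring1)) h

lemma L15 (hq : q ≠ 0) :
    S q 2 i2 i3 * S q 2 i1 i0 = S q 2 i1 i0 * S q 2 i2 i3 := by
  have h := rel_eq q (SpRel.reflection (q := q) i2 i1 i3 i0)
  simp only [map_sub, map_add, map_smul, map_mul, S_def] at h
  simp (config := { decide := true }) only [qd, dlt, dlt3, if_true, if_false, Z02, Z03, Z12, Z13, mul_zero,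
    zero_mul, smul_zero, add_zero, zero_add, sub_zero, zero_sub, neg_zero] at h
  linear_combination (norm := match_scalars <;> (field_simp; try ring1)) h

lemma L16 (hq : q ≠ 0) :
    S q 2 i2 i1 * S q 2 i3 i0 - S q 2 i3 i0 * S q 2 i2 i1 = (q - q⁻¹) • (S q 2 i3 i2 * S q 2 i0 i1) - (q - q⁻¹) • (S q 2 i2 i3 * S q 2 i1 i0) := by
  have h := rel_eq q (SpRel.reflection (q := q) i2 i3 i1 i0)
  simp only [map_sub, map_add, map_smul, map_mul, S_def] at h
  simp (config := { decide := true }) only [qd, dlt, dlt3, if_true, if_false, Z02, Z03, Z12, Z13, mul_zero,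
    zero_mul, smul_zero, add_zero, zero_add, sub_zero, zero_sub, neg_zero] at h
  linear_combination (norm := match_scalars <;> (field_simp; try ring1)) h

lemma IR0 : S q 2 i0 i1 * SInv q 2 k0 = 1 := by
  have h := rel_eq q (SpRel.inv_right (q := q) k0)
  simp only [map_mul, map_one] at h
  exact h
lemma IL0 : SInv q 2 k0 * S q 2 i0 i1 = 1 := by
  have h := rel_eq q (SpRel.inv_left (q := q) k0)
  simp only [map_mul, map_one] at h
  exact h
lemma IR1 : S q 2 i2 i3 * SInv q 2 k1 = 1 := by
  have h := rel_eq q (SpRel.inv_right (q := q) k1)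
  simp only [map_mul, map_one] at h
  exact h
lemma IL1 : SInv q 2 k1 * S q 2 i2 i3 = 1 := by
  have h := rel_eq q (SpRel.inv_left (q := q) k1)
  simp only [map_mul, map_one] at h
  exact h
lemma D0 : S q 2 i1 i1 * S q 2 i0 i0 - (q^2) • (S q 2 i1 i0 * S q 2 i0 i1) = (q^3) • 1 := by
  have h := rel_eq q (SpRel.qdet (q := q) k0)
  simp only [map_sub, map_smul, map_mul, map_one] at h
  exact h
lemma D1 : S q 2 i3 i3 * S q 2 i2 i2 - (q^2) • (S q 2 i3 i2 * S q 2 i2 i3) = (q^3) • 1 := by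
  have h := rel_eq q (SpRel.qdet (q := q) k1)
  simp only [map_sub, map_smul, map_mul, map_one] at h
  exact h

lemma conjInvAux {A : Type*} [Ring A] [Algebra ℂ A] (u ui x : A) (c : ℂ)
    (h1 : u * ui = 1) (h2 : ui * u = 1) (h : c • (x * u) = u * x) :
    x * ui = c • (ui * x) := by
  have h' := congrArg (fun z => ui * z * ui) h
  simp only [mul_smul_comm, smul_mul_assoc, mul_assoc] at h'
  rw [h1, mul_one] at h'
  rw [← mul_assoc ui u, h2, one_mul] at h'
  exact h'.symm

lemma T1 (hq : q ≠ 0) : S q 2 i0 i0 * SInv q 2 k0 = (q^2) • (SInv q 2 k0 * S q 2 i0 i0) :=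
  conjInvAux _ _ _ _ (IR0 q) (IL0 q) (L4 q hq)
lemma T2 (hq : q ≠ 0) : S q 2 i2 i0 * SInv q 2 k0 = q • (SInv q 2 k0 * S q 2 i2 i0) :=
  conjInvAux _ _ _ _ (IR0 q) (IL0 q) (L2 q hq)
lemma T3 (hq : q ≠ 0) : S q 2 i2 i2 * SInv q 2 k0 = SInv q 2 k0 * S q 2 i2 i2 := by
  have h := conjInvAux (S q 2 i0 i1) (SInv q 2 k0) (S q 2 i2 i2) 1 (IR0 q) (IL0 q)
    (by rw [one_smul]; exact L11 q hq)
  simpa using h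
lemma T4 (hq : q ≠ 0) : S q 2 i0 i0 * SInv q 2 k1 = SInv q 2 k1 * S q 2 i0 i0 := by
  have h := conjInvAux (S q 2 i2 i3) (SInv q 2 k1) (S q 2 i0 i0) 1 (IR1 q) (IL1 q)
    (by rw [one_smul]; exact L5 q hq)
  simpa using h
lemma T5 (hq : q ≠ 0) : S q 2 i2 i0 * SInv q 2 k1 = q • (SInv q 2 k1 * S q 2 i2 i0) :=
  conjInvAux _ _ _ _ (IR1 q) (IL1 q) (L8 q hq)
lemma T6 (hq : q ≠ 0) : S q 2 i2 i2 * SInv q 2 k1 = (q^2) • (SInv q 2 k1 * S q 2 i2 i2) :=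
  conjInvAux _ _ _ _ (IR1 q) (IL1 q) (L12 q hq)

lemma smul_cancel0 {V : Type} [AddCommGroup V] [Module ℂ V] {c : ℂ} (hc : c ≠ 0)
    {x : V} (h : c • x = 0) : x = 0 := by
  have h2 := congrArg (fun z => c⁻¹ • z) h
  simpa [smul_smul, inv_mul_cancel₀ hc] using h2

lemma uspSmulComm {V : Type} [AddCommGroup V] [Module ℂ V] [Module (Usp q 2) V]
    [IsScalarTower ℂ (Usp q 2) V] (a : Usp q 2) (c : ℂ) (w : V) :
    a • (c • w) = c • (a • w) := by
  have h1 : c • w = (c • (1 : Usp q 2)) • w := by rw [smul_assoc, one_smul]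
  rw [h1, ← mul_smul, mul_smul_comm, mul_one, smul_assoc]


lemma smul_cancelE {V : Type} [AddCommGroup V] [Module ℂ V] {c : ℂ} (hc : c ≠ 0)
    {x y : V} (h : c • x = c • y) : x = y := by
  have h2 := congrArg (fun z => c⁻¹ • z) h
  simpa [smul_smul, inv_mul_cancel₀ hc] using h2

/-- For a `U'_q(sp₄)`-module `V`, the subspace
`L⁰ = {v : s₁₁ v = s₃₁ v = s₃₃ v = 0}` is stable under
`s₃₂, s₄₁, s₁₂, s₃₄, s₁₂⁻¹, s₃₄⁻¹`, and on `L⁰` the relation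
`s₃₂ s₄₁ − s₄₁ s₃₂ = (q²−1)(s₁₂⁻¹ s₃₄ − s₁₂ s₃₄⁻¹)` holds. -/
theorem Lzero_stable_and_commutator (hq : q ≠ 0)
    (hroot : ∀ m : ℕ, 0 < m → q ^ m ≠ 1)
    (V : Type) [AddCommGroup V] [Module ℂ V] [Module (Usp q 2) V]
    [IsScalarTower ℂ (Usp q 2) V] :
    (∀ v ∈ Lzero q V, S q 2 i2 i1 • v ∈ Lzero q V) ∧
    (∀ v ∈ Lzero q V, S q 2 i3 i0 • v ∈ Lzero q V) ∧
    (∀ v ∈ Lzero q V, S q 2 i0 i1 • v ∈ Lzero q V) ∧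
    (∀ v ∈ Lzero q V, S q 2 i2 i3 • v ∈ Lzero q V) ∧
    (∀ v ∈ Lzero q V, SInv q 2 k0 • v ∈ Lzero q V) ∧
    (∀ v ∈ Lzero q V, SInv q 2 k1 • v ∈ Lzero q V) ∧
    ∀ v ∈ Lzero q V,
      S q 2 i2 i1 • (S q 2 i3 i0 • v) - S q 2 i3 i0 • (S q 2 i2 i1 • v)
        = (q ^ 2 - 1) •
            ((SInv q 2 k0 * S q 2 i2 i3) • v - (S q 2 i0 i1 * SInv q 2 k1) • v) := by
  have hq2 : (q^2 : ℂ) ≠ 0 := pow_ne_zero 2 hq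
  -- auxiliary pointwise facts
  have P1 : ∀ v : V, S q 2 i2 i0 • v = 0 → S q 2 i2 i0 • (S q 2 i0 i1 • v) = 0 := by
    intro v hv
    have e := congrArg (fun z : Usp q 2 => z • v) (L2 q hq)
    simp only [smul_assoc, mul_smul, sub_smul, smul_sub, add_smul, smul_add, one_smul] at e
    rw [hv, smul_zero] at e
    exact smul_cancel0 hq e
  have P2 : ∀ v : V, S q 2 i2 i2 • v = 0 → S q 2 i2 i2 • (S q 2 i0 i1 • v) = 0 := by
    intro v hv
    have e := congrArg (fun z : Usp q 2 => z • v) (L11 q hq)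
    simp only [smul_assoc, mul_smul, sub_smul, smul_sub, add_smul, smul_add, one_smul] at e
    rw [hv, smul_zero] at e
    exact e
  have P3 : ∀ v : V, S q 2 i2 i2 • v = 0 → S q 2 i2 i2 • (S q 2 i1 i0 • v) = 0 := by
    intro v hv
    have e := congrArg (fun z : Usp q 2 => z • v) (L13 q hq)
    simp only [smul_assoc, mul_smul, sub_smul, smul_sub, add_smul, smul_add, one_smul] at e
    rw [hv, smul_zero] at e
    exact e
  have P4 : ∀ v : V, S q 2 i2 i2 • v = 0 → S q 2 i2 i2 • (S q 2 i2 i1 • v) = 0 := by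
    intro v hv
    have e := congrArg (fun z : Usp q 2 => z • v) (L9 q hq)
    simp only [smul_assoc, mul_smul, sub_smul, smul_sub, add_smul, smul_add, one_smul] at e
    rw [hv, smul_zero] at e
    exact e
  have P5 : ∀ v : V, S q 2 i0 i0 • v = 0 → S q 2 i0 i0 • (S q 2 i3 i0 • v) = 0 := by
    intro v hv
    have e := congrArg (fun z : Usp q 2 => z • v) (L3 q hq)
    simp only [smul_assoc, mul_smul, sub_smul, smul_sub, add_smul, smul_add, one_smul] at e
    rw [hv, smul_zero] at e
    exact e
  have P6 : ∀ v : V, S q 2 i0 i0 • v = 0 → S q 2 i0 i0 • (S q 2 i2 i3 • v) = 0 := by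
    intro v hv
    have e := congrArg (fun z : Usp q 2 => z • v) (L5 q hq)
    simp only [smul_assoc, mul_smul, sub_smul, smul_sub, add_smul, smul_add, one_smul] at e
    rw [hv, smul_zero] at e
    exact e
  have P7 : ∀ v : V, S q 2 i2 i0 • v = 0 → S q 2 i2 i0 • (S q 2 i2 i3 • v) = 0 := by
    intro v hv
    have e := congrArg (fun z : Usp q 2 => z • v) (L8 q hq)
    simp only [smul_assoc, mul_smul, sub_smul, smul_sub, add_smul, smul_add, one_smul] at e
    rw [hv, smul_zero] at e
    exact smul_cancel0 hq e
  have P8 : ∀ v : V, S q 2 i2 i2 • v = 0 → S q 2 i2 i2 • (S q 2 i2 i3 • v) = 0 := by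
    intro v hv
    have e := congrArg (fun z : Usp q 2 => z • v) (L12 q hq)
    simp only [smul_assoc, mul_smul, sub_smul, smul_sub, add_smul, smul_add, one_smul] at e
    rw [hv, smul_zero] at e
    exact smul_cancel0 hq2 e
  have P9 : ∀ v : V, S q 2 i0 i0 • v = 0 → S q 2 i0 i0 • (S q 2 i0 i1 • v) = 0 := by
    intro v hv
    have e := congrArg (fun z : Usp q 2 => z • v) (L4 q hq)
    simp only [smul_assoc, mul_smul, sub_smul, smul_sub, add_smul, smul_add, one_smul] at e
    rw [hv, smul_zero] at e
    exact smul_cancel0 hq2 e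
  have Q1 : ∀ v : V, S q 2 i0 i0 • v = 0 → S q 2 i0 i0 • (SInv q 2 k0 • v) = 0 := by
    intro v hv
    have e := congrArg (fun z : Usp q 2 => z • v) (T1 q hq)
    simp only [smul_assoc, mul_smul, sub_smul, smul_sub, add_smul, smul_add, one_smul] at e
    rw [hv, smul_zero, smul_zero] at e
    exact e
  have Q2 : ∀ v : V, S q 2 i2 i0 • v = 0 → S q 2 i2 i0 • (SInv q 2 k0 • v) = 0 := by
    intro v hv
    have e := congrArg (fun z : Usp q 2 => z • v) (T2 q hq)
    simp only [smul_assoc, mul_smul, sub_smul, smul_sub, add_smul, smul_add, one_smul] at e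
    rw [hv, smul_zero, smul_zero] at e
    exact e
  have Q3 : ∀ v : V, S q 2 i2 i2 • v = 0 → S q 2 i2 i2 • (SInv q 2 k0 • v) = 0 := by
    intro v hv
    have e := congrArg (fun z : Usp q 2 => z • v) (T3 q hq)
    simp only [smul_assoc, mul_smul, sub_smul, smul_sub, add_smul, smul_add, one_smul] at e
    rw [hv, smul_zero] at e
    exact e
  have Q4 : ∀ v : V, S q 2 i0 i0 • v = 0 → S q 2 i0 i0 • (SInv q 2 k1 • v) = 0 := by
    intro v hv
    have e := congrArg (fun z : Usp q 2 => z • v) (T4 q hq)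
    simp only [smul_assoc, mul_smul, sub_smul, smul_sub, add_smul, smul_add, one_smul] at e
    rw [hv, smul_zero] at e
    exact e
  have Q5 : ∀ v : V, S q 2 i2 i0 • v = 0 → S q 2 i2 i0 • (SInv q 2 k1 • v) = 0 := by
    intro v hv
    have e := congrArg (fun z : Usp q 2 => z • v) (T5 q hq)
    simp only [smul_assoc, mul_smul, sub_smul, smul_sub, add_smul, smul_add, one_smul] at e
    rw [hv, smul_zero, smul_zero] at e
    exact e
  have Q6 : ∀ v : V, S q 2 i2 i2 • v = 0 → S q 2 i2 i2 • (SInv q 2 k1 • v) = 0 := by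
    intro v hv
    have e := congrArg (fun z : Usp q 2 => z • v) (T6 q hq)
    simp only [smul_assoc, mul_smul, sub_smul, smul_sub, add_smul, smul_add, one_smul] at e
    rw [hv, smul_zero, smul_zero] at e
    exact e
  -- s10 and s32 act as -q times the inverses on L0
  have R0 : ∀ v : V, S q 2 i0 i0 • v = 0 → S q 2 i1 i0 • v = (-q) • (SInv q 2 k0 • v) := by
    intro v hv
    have hrec : S q 2 i0 i1 • (SInv q 2 k0 • v) = v := by
      have e := congrArg (fun z : Usp q 2 => z • v) (IR0 q)
      simp only [mul_smul, one_smul] at e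
      exact e
    have e := congrArg (fun z : Usp q 2 => z • (SInv q 2 k0 • v)) (D0 q)
    simp only [smul_assoc, mul_smul, sub_smul, smul_sub, one_smul] at e
    rw [Q1 v hv, smul_zero, hrec, zero_sub] at e
    have e3 : (q^2) • (S q 2 i1 i0 • v) = (q^2) • ((-q) • (SInv q 2 k0 • v)) := by
      rw [smul_smul]
      have hc : (q^2 * -q) = -(q^3) := by ring
      rw [hc, neg_smul, ← e, neg_neg]
    exact smul_cancelE hq2 e3
  have R1 : ∀ v : V, S q 2 i2 i2 • v = 0 → S q 2 i3 i2 • v = (-q) • (SInv q 2 k1 • v) := by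
    intro v hv
    have hrec : S q 2 i2 i3 • (SInv q 2 k1 • v) = v := by
      have e := congrArg (fun z : Usp q 2 => z • v) (IR1 q)
      simp only [mul_smul, one_smul] at e
      exact e
    have e := congrArg (fun z : Usp q 2 => z • (SInv q 2 k1 • v)) (D1 q)
    simp only [smul_assoc, mul_smul, sub_smul, smul_sub, one_smul] at e
    rw [Q6 v hv, smul_zero, hrec, zero_sub] at e
    have e3 : (q^2) • (S q 2 i3 i2 • v) = (q^2) • ((-q) • (SInv q 2 k1 • v)) := by
      rw [smul_smul]
      have hc : (q^2 * -q) = -(q^3) := by ring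
      rw [hc, neg_smul, ← e, neg_neg]
    exact smul_cancelE hq2 e3
  refine ⟨?_, ?_, ?_, ?_, ?_, ?_, ?_⟩
  · rintro v ⟨hv0, hv2, hv22⟩
    refine ⟨?_, ?_, P4 v hv22⟩
    · have e := congrArg (fun z : Usp q 2 => z • v) (L1 q hq)
      simp only [smul_assoc, mul_smul, sub_smul, smul_sub, add_smul, smul_add, one_smul] at e
      simp only [hv0, P1 v hv2, smul_zero, sub_zero, sub_self] at e
      exact e
    · have e := congrArg (fun z : Usp q 2 => z • v) (L6 q hq)
      simp only [smul_assoc, mul_smul, sub_smul, smul_sub, add_smul, smul_add, one_smul] at e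
      simp only [hv2, P2 v hv22, P3 v hv22, smul_zero, sub_zero, add_zero, zero_sub,
        neg_zero, zero_add, sub_self] at e
      exact smul_cancel0 hq e
  · rintro v ⟨hv0, hv2, hv22⟩
    refine ⟨P5 v hv0, ?_, ?_⟩
    · have e := congrArg (fun z : Usp q 2 => z • v) (L7 q hq)
      simp only [smul_assoc, mul_smul, sub_smul, smul_sub, add_smul, smul_add, one_smul] at e
      simp only [hv0, hv2, smul_zero, sub_zero, add_zero, zero_sub, neg_zero,
        zero_add, sub_self] at e
      exact smul_cancel0 hq e
    · have e := congrArg (fun z : Usp q 2 => z • v) (L10 q hq)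
      simp only [smul_assoc, mul_smul, sub_smul, smul_sub, add_smul, smul_add, one_smul] at e
      simp only [hv0, hv2, hv22, smul_zero, sub_zero, add_zero, zero_sub, neg_zero,
        zero_add, sub_self] at e
      exact e
  · rintro v ⟨hv0, hv2, hv22⟩
    exact ⟨P9 v hv0, P1 v hv2, P2 v hv22⟩
  · rintro v ⟨hv0, hv2, hv22⟩
    exact ⟨P6 v hv0, P7 v hv2, P8 v hv22⟩
  · rintro v ⟨hv0, hv2, hv22⟩
    exact ⟨Q1 v hv0, Q2 v hv2, Q3 v hv22⟩
  · rintro v ⟨hv0, hv2, hv22⟩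
    exact ⟨Q4 v hv0, Q5 v hv2, Q6 v hv22⟩
  · rintro v ⟨hv0, hv2, hv22⟩
    have h32 : S q 2 i3 i2 • v = (-q) • (SInv q 2 k1 • v) := R1 v hv22
    have h10 : S q 2 i1 i0 • (S q 2 i2 i3 • v) = (-q) • (SInv q 2 k0 • (S q 2 i2 i3 • v)) :=
      R0 (S q 2 i2 i3 • v) (P6 v hv0)
    have e := congrArg (fun z : Usp q 2 => z • v) (L16 q hq)
    simp only [smul_assoc, mul_smul, sub_smul, smul_sub] at e
    have e14 := congrArg (fun z : Usp q 2 => z • v) (L14 q hq)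
    simp only [mul_smul] at e14
    have e15 := congrArg (fun z : Usp q 2 => z • v) (L15 q hq)
    simp only [mul_smul] at e15
    rw [e14, e15, h32, h10, uspSmulComm q (S q 2 i0 i1) (-q) (SInv q 2 k1 • v)] at e
    rw [mul_smul, mul_smul, e]
    simp only [smul_smul]
    rw [show q * -q = -(q^2) from by ring, show q⁻¹ * -q = -1 from by field_simp]
    simp only [neg_smul, one_smul, smul_sub, sub_smul]
    abel

end
end
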